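/- Let C, D be n×n positive definite matrices. If the eigenvalue vector of D is weakly majorized by that of C, then the eigenvalue vector of C^{1/2} D C^{1/2} is weakly majorized by that of C². -/

import Mathlib

open Matrix ComplexOrder

namespace Matrix.PosSemidef

variable {𝕜 : Type*} [RCLike 𝕜] {m : Type*} [Fintype m] [DecidableEq m] {A : Matrix m m 𝕜}

/-- The positive semidefinite square root of a positive semidefinite matrix
(the definition Mathlib had in December 2024, since removed). -/
noncomputable def sqrt (hA : PosSemidef A) : Matrix m m 𝕜 :=
  hA.1.eigenvectorUnitary.1 * diagonal ((↑) ∘ (√·) ∘ hA.1.eigenvalues) *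
  (star hA.1.eigenvectorUnitary : Matrix m m 𝕜)

lemma posSemidef_sqrt (hA : PosSemidef A) : PosSemidef hA.sqrt := by
  apply PosSemidef.mul_mul_conjTranspose_same
  refine posSemidef_diagonal_iff.mpr fun i ↦ ?_
  rw [Function.comp_apply, RCLike.nonneg_iff]
  constructor
  · simp only [RCLike.ofReal_re]
    exact Real.sqrt_nonneg _
  · simp only [RCLike.ofReal_im]

end Matrix.PosSemidef

namespace Heron

variable {n : ℕ}

def WeakMaj {n : ℕ} (x y : Fin n → ℝ) : Prop :=
  ∀ s : Finset (Fin n), ∃ t : Finset (Fin n),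
    t.card = s.card ∧ ∑ i ∈ s, x i ≤ ∑ i ∈ t, y i

def Maj {n : ℕ} (x y : Fin n → ℝ) : Prop :=
  WeakMaj x y ∧ ∑ i, x i = ∑ i, y i

lemma sandwich_posSemidef {S T : Matrix (Fin n) (Fin n) ℂ} (hS : S.IsHermitian)
    (hT : T.PosSemidef) : (S * T * S).PosSemidef := by
  have h := hT.mul_mul_conjTranspose_same S
  rwa [hS.eq] at h

noncomputable def geomMean {A B : Matrix (Fin n) (Fin n) ℂ}
    (hA : A.PosDef) (hB : B.PosDef) : Matrix (Fin n) (Fin n) ℂ :=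
  hA.posSemidef.sqrt *
    (sandwich_posSemidef hA.posSemidef.posSemidef_sqrt.isHermitian.inv
        hB.posSemidef).sqrt *
    hA.posSemidef.sqrt

lemma geomMean_posSemidef {A B : Matrix (Fin n) (Fin n) ℂ}
    (hA : A.PosDef) (hB : B.PosDef) : (geomMean hA hB).PosSemidef :=
  sandwich_posSemidef hA.posSemidef.posSemidef_sqrt.isHermitian
    (Matrix.PosSemidef.posSemidef_sqrt _)

noncomputable def specMean {A B : Matrix (Fin n) (Fin n) ℂ}
    (hA : A.PosDef) (hB : B.PosDef) : Matrix (Fin n) (Fin n) ℂ :=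
  (geomMean_posSemidef hA.inv hB).sqrt * A * (geomMean_posSemidef hA.inv hB).sqrt

def HasPosSpectrum (M : Matrix (Fin n) (Fin n) ℂ) : Prop :=
  ∀ z ∈ spectrum ℂ M, 0 < z.re ∧ z.im = 0

def IsPrincipalSqrt (M S : Matrix (Fin n) (Fin n) ℂ) : Prop :=
  S * S = M ∧ HasPosSpectrum S

noncomputable def absMat (Y : Matrix (Fin n) (Fin n) ℂ) : Matrix (Fin n) (Fin n) ℂ :=
  (Matrix.posSemidef_conjTranspose_mul_self Y).sqrt

noncomputable def posPart (H : Matrix (Fin n) (Fin n) ℂ) : Matrix (Fin n) (Fin n) ℂ :=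
  ((1 : ℂ) / 2) • (absMat H + H)

/-!
Let `X = C^{1/2} D C^{1/2}`, let `s` index `k` eigenvalues `μᵢ` of `X`, and let `P` be the
spectral projection of `X` onto them. With `Q = C^{1/2} P C^{1/2}` one has `∑_{i∈s} μᵢ = tr (D Q)`
and `0 ≤ Q ≤ C`, while Ky Fan's maximum principle gives `tr Q = tr (C P) ≤ c₁ + ⋯ + cₖ` for the
decreasing eigenvalues `c` of `C`. If `eᵢ` is the diagonal of `Q` in an eigenbasis of `D`, then
`tr (D Q) = ∑ dᵢ eᵢ`, and Ky Fan once more, through `Q ≤ C` or through the bound on `tr Q`,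
gives `∑_{i∈J} eᵢ ≤ c₁ + ⋯ + c_{min(#J, k)}` for every `J`. Abel summation against the decreasing `d` turns this into
`∑ dᵢ eᵢ ≤ ∑_{j<k} dⱼ cⱼ`, and a second Abel summation against `c`, using `d ≺_w c`, into
`∑_{j<k} cⱼ²`: the sum of the `k` largest eigenvalues of `C²`.
-/

open Finset

section Rearrangement

def padZero (w : Fin n → ℝ) (j : ℕ) : ℝ := if h : j < n then w ⟨j, h⟩ else 0

@[simp]
lemma padZero_coe (w : Fin n → ℝ) (i : Fin n) : padZero w i = w i := by
  simp [padZero]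

lemma padZero_nonneg {w : Fin n → ℝ} (hw : 0 ≤ w) (j : ℕ) : 0 ≤ padZero w j := by
  unfold padZero; split
  · exact hw _
  · exact le_rfl

lemma antitone_padZero {w : Fin n → ℝ} (hw : Antitone w) (hw0 : 0 ≤ w) :
    Antitone (padZero w) := by
  intro i j hij
  unfold padZero
  split_ifs with hj hi hi
  · exact hw (Fin.mk_le_mk.mpr hij)
  · omega
  · exact hw0 _
  · exact le_rfl

lemma exists_card_eq_sum_range_padZero (v : Fin n → ℝ) (σ : Equiv.Perm (Fin n)) {m : ℕ}
    (hm : m ≤ n) : ∃ J : Finset (Fin n), #J = m ∧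
      ∑ j ∈ range m, padZero (v ∘ σ) j = ∑ i ∈ J, v i := by
  refine ⟨univ.map ((Fin.castLEEmb hm).trans σ.toEmbedding), by simp, ?_⟩
  rw [sum_map, ← Fin.sum_univ_eq_sum_range]
  refine sum_congr rfl fun i _ => ?_
  simp [padZero, Fin.castLE, lt_of_lt_of_le i.isLt hm]

lemma sum_range_ite_lt {M : Type*} [AddCommMonoid M] (f : ℕ → M) (m k : ℕ) :
    ∑ j ∈ range m, (if j < k then f j else 0) = ∑ j ∈ range (min m k), f j := by
  rw [← sum_filter]
  congr 1
  ext j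
  simp

lemma sum_range_mul_le_sum_range_mul {a u w : ℕ → ℝ} {N : ℕ} (ha : Antitone a)
    (ha0 : ∀ j, 0 ≤ a j) (h : ∀ m ≤ N, ∑ j ∈ range m, u j ≤ ∑ j ∈ range m, w j) :
    ∑ j ∈ range N, a j * u j ≤ ∑ j ∈ range N, a j * w j := by
  have hδ : ∀ m ≤ N, 0 ≤ ∑ j ∈ range m, (w j - u j) := fun m hm => by
    rw [sum_sub_distrib]; linarith [h m hm]
  have key := sum_range_by_parts (f := a) (g := fun j => w j - u j) (n := N)
  simp only [smul_eq_mul] at key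
  have hN : 0 ≤ a (N - 1) * ∑ j ∈ range N, (w j - u j) := mul_nonneg (ha0 _) (hδ N le_rfl)
  have htail : ∑ i ∈ range (N - 1), (a (i + 1) - a i) * ∑ j ∈ range (i + 1), (w j - u j) ≤ 0 :=
    sum_nonpos fun i hi => mul_nonpos_of_nonpos_of_nonneg
      (sub_nonpos.mpr (ha (Nat.le_succ i))) (hδ _ (by simp at hi; omega))
  have : 0 ≤ ∑ j ∈ range N, a j * (w j - u j) := by rw [key]; linarith
  simpa [mul_sub, sum_sub_distrib] using this

end Rearrangement

section TopSum

noncomputable def sortDesc (v : Fin n → ℝ) : Equiv.Perm (Fin n) := Tuple.sort (OrderDual.toDual ∘ v)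

lemma antitone_comp_sortDesc (v : Fin n → ℝ) : Antitone (v ∘ sortDesc v) :=
  fun _ _ h => Tuple.monotone_sort (OrderDual.toDual ∘ v) h

/-- The sum of the `k` largest entries of `v`. -/
noncomputable def topSum (v : Fin n → ℝ) (k : ℕ) : ℝ := ∑ j ∈ range k, padZero (v ∘ sortDesc v) j

lemma comp_eq_comp_of_antitone {v w : Fin n → ℝ} {σ τ : Equiv.Perm (Fin n)}
    (h : univ.val.map v = univ.val.map w) (hσ : Antitone (v ∘ σ)) (hτ : Antitone (w ∘ τ)) :
    v ∘ σ = w ∘ τ := by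
  have hvw : (List.ofFn v).Perm (List.ofFn w) := by
    rwa [Fin.univ_val_map, Fin.univ_val_map, Multiset.coe_eq_coe] at h
  exact List.ofFn_injective <|
    (((σ.ofFn_comp_perm v).trans hvw).trans (τ.ofFn_comp_perm w).symm).eq_of_pairwise'
      hσ.sortedGE_ofFn.pairwise hτ.sortedGE_ofFn.pairwise

lemma topSum_congr {v w : Fin n → ℝ} (h : univ.val.map v = univ.val.map w) (k : ℕ) :
    topSum v k = topSum w k := by
  rw [topSum, topSum, comp_eq_comp_of_antitone h (antitone_comp_sortDesc v)
    (antitone_comp_sortDesc w)]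

lemma topSum_eq_of_antitone {v : Fin n → ℝ} {σ : Equiv.Perm (Fin n)} (hσ : Antitone (v ∘ σ))
    (k : ℕ) : topSum v k = ∑ j ∈ range k, padZero (v ∘ σ) j := by
  rw [topSum, comp_eq_comp_of_antitone rfl (antitone_comp_sortDesc v) hσ]

lemma exists_card_eq_sum_eq_topSum (v : Fin n → ℝ) {k : ℕ} (hk : k ≤ n) :
    ∃ J : Finset (Fin n), #J = k ∧ ∑ i ∈ J, v i = topSum v k := by
  obtain ⟨J, hJ, hsum⟩ := exists_card_eq_sum_range_padZero v (sortDesc v) hk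
  exact ⟨J, hJ, hsum.symm⟩

lemma sum_mul_le_sum_range_mul {d e : Fin n → ℝ} (hd : 0 ≤ d) (b : ℕ → ℝ) {k : ℕ} (hk : k ≤ n)
    (he : ∀ m ≤ n, ∑ j ∈ range m, padZero (e ∘ sortDesc d) j ≤ ∑ j ∈ range (min m k), b j) :
    ∑ i, d i * e i ≤ ∑ j ∈ range k, padZero (d ∘ sortDesc d) j * b j := by
  set σ := sortDesc d
  have hreindex : ∑ i, d i * e i = ∑ j ∈ range n, padZero (d ∘ σ) j * padZero (e ∘ σ) j := by
    rw [← Fin.sum_univ_eq_sum_range (fun j => padZero (d ∘ σ) j * padZero (e ∘ σ) j),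
      ← Equiv.sum_comp σ]
    simp
  have habel := sum_range_mul_le_sum_range_mul (N := n)
    (antitone_padZero (antitone_comp_sortDesc d) fun i => hd (σ i))
    (padZero_nonneg fun i => hd (σ i))
    (u := padZero (e ∘ σ)) (w := fun j => if j < k then b j else 0)
    fun m hm => by rw [sum_range_ite_lt]; exact he m hm
  have hcut : ∑ j ∈ range n, padZero (d ∘ σ) j * (if j < k then b j else 0) =
      ∑ j ∈ range k, padZero (d ∘ σ) j * b j := by
    simp_rw [mul_ite, mul_zero]
    rw [sum_range_ite_lt, min_eq_right hk]
  rw [hreindex]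
  exact habel.trans hcut.le

lemma sum_mul_le_topSum {v w : Fin n → ℝ} (hv : 0 ≤ v) (hw0 : 0 ≤ w) (hw1 : w ≤ 1) {k : ℕ}
    (hk : k ≤ n) (hw : ∑ i, w i ≤ k) : ∑ i, v i * w i ≤ topSum v k := by
  have := sum_mul_le_sum_range_mul hv (fun _ => 1) hk fun m hm => by
    obtain ⟨J, hJ, hsum⟩ := exists_card_eq_sum_range_padZero w (sortDesc v) hm
    rw [hsum, sum_const, card_range, nsmul_one, Nat.cast_min]
    refine le_min ?_ ?_
    · simpa [hJ] using sum_le_card_nsmul J w 1 fun i _ => hw1 i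
    · exact (sum_le_sum_of_subset_of_nonneg (subset_univ J) fun i _ _ => hw0 i).trans hw
  simpa [topSum] using this

lemma sum_le_topSum {v : Fin n → ℝ} (hv : 0 ≤ v) {J : Finset (Fin n)} {k : ℕ} (hJ : #J ≤ k)
    (hk : k ≤ n) : ∑ i ∈ J, v i ≤ topSum v k := by
  have := sum_mul_le_topSum hv (w := fun i => if i ∈ J then 1 else 0)
    (fun i => by dsimp; split <;> norm_num) (fun i => by dsimp; split <;> norm_num) hk
    (by simpa using hJ)
  simpa [mul_ite] using this

lemma sum_le_topSum_of_weakMaj {d c : Fin n → ℝ} (hc : 0 ≤ c) (h : WeakMaj d c)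
    (J : Finset (Fin n)) : ∑ i ∈ J, d i ≤ topSum c #J := by
  obtain ⟨t, ht, hle⟩ := h J
  exact hle.trans (sum_le_topSum hc ht.le ((card_le_univ J).trans_eq (Fintype.card_fin n)))

theorem sum_mul_le_topSum_sq {d e c : Fin n → ℝ} (hd : 0 ≤ d) (hc : 0 ≤ c) (hdc : WeakMaj d c)
    {k : ℕ} (hk : k ≤ n) (he : ∀ J : Finset (Fin n), ∑ i ∈ J, e i ≤ topSum c (min #J k)) :
    ∑ i, d i * e i ≤ topSum (c ^ 2) k := by
  set b := padZero (c ∘ sortDesc c)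
  have hb : Antitone b := antitone_padZero (antitone_comp_sortDesc c) fun i => hc (sortDesc c i)
  have hb0 : ∀ j, 0 ≤ b j := padZero_nonneg fun i => hc (sortDesc c i)
  have hde : ∑ i, d i * e i ≤ ∑ j ∈ range k, padZero (d ∘ sortDesc d) j * b j :=
    sum_mul_le_sum_range_mul hd b hk fun m hm => by
      obtain ⟨J, hJ, hsum⟩ := exists_card_eq_sum_range_padZero e (sortDesc d) hm
      rw [hsum, ← hJ]
      exact he J
  have hdb : ∑ j ∈ range k, b j * padZero (d ∘ sortDesc d) j ≤ ∑ j ∈ range k, b j * b j :=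
    sum_range_mul_le_sum_range_mul hb hb0 fun m hm => by
      obtain ⟨J, hJ, hsum⟩ := exists_card_eq_sum_range_padZero d (sortDesc d) (hm.trans hk)
      rw [hsum, ← hJ]
      exact sum_le_topSum_of_weakMaj hc hdc J
  have hsq : Antitone ((c ^ 2) ∘ sortDesc c) := fun i j hij =>
    pow_le_pow_left₀ (hc _) (antitone_comp_sortDesc c hij) 2
  have hcc : ∑ j ∈ range k, b j * b j = topSum (c ^ 2) k := by
    rw [topSum_eq_of_antitone hsq]
    refine sum_congr rfl fun j _ => ?_
    simp only [b, padZero]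
    split <;> simp [sq]
  simp only [mul_comm (padZero _ _)] at hde
  linarith

end TopSum

section Eigenbasis

variable {𝕜 : Type*} [RCLike 𝕜] {ι : Type*} [Fintype ι] [DecidableEq ι] {Y : Matrix ι ι 𝕜}

lemma trace_mul_unitary_conj_diagonal {V : Matrix ι ι 𝕜} (B : Matrix ι ι 𝕜) (f : ι → 𝕜) :
    (B * (V * diagonal f * star V)).trace = ∑ i, (star V * B * V) i i * f i := by
  rw [← trace_mul_comm, show V * diagonal f * star V * B = V * (diagonal f * (star V * B)) by
    simp only [mul_assoc], trace_mul_comm, trace]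
  simp [mul_assoc, mul_comm]

noncomputable def eigenbasisDiag (hY : Y.IsHermitian) (B : Matrix ι ι 𝕜) (i : ι) : ℝ :=
  RCLike.re ((star (hY.eigenvectorUnitary : Matrix ι ι 𝕜) * B * hY.eigenvectorUnitary) i i)

lemma eigenbasisDiag_nonneg (hY : Y.IsHermitian) {B : Matrix ι ι 𝕜} (hB : B.PosSemidef) (i : ι) :
    0 ≤ eigenbasisDiag hY B i := by
  have h := (hB.conjTranspose_mul_mul_same (hY.eigenvectorUnitary : Matrix ι ι 𝕜)).diag_nonneg
    (i := i)
  exact (RCLike.nonneg_iff.mp h).1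

lemma eigenbasisDiag_sub (hY : Y.IsHermitian) (B B' : Matrix ι ι 𝕜) (i : ι) :
    eigenbasisDiag hY (B - B') i = eigenbasisDiag hY B i - eigenbasisDiag hY B' i := by
  simp [eigenbasisDiag, mul_sub, sub_mul]

lemma eigenbasisDiag_one (hY : Y.IsHermitian) (i : ι) : eigenbasisDiag hY 1 i = 1 := by
  simp [eigenbasisDiag]

lemma eigenbasisDiag_self (hY : Y.IsHermitian) (i : ι) :
    eigenbasisDiag hY Y i = hY.eigenvalues i := by
  have h := hY.conjStarAlgAut_star_eigenvectorUnitary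
  rw [Unitary.conjStarAlgAut_star_apply] at h
  simp [eigenbasisDiag, h]

lemma sum_eigenbasisDiag (hY : Y.IsHermitian) (B : Matrix ι ι 𝕜) :
    ∑ i, eigenbasisDiag hY B i = RCLike.re B.trace := by
  simpa [trace, eigenbasisDiag] using congrArg RCLike.re (trace_mul_unitary_conj_diagonal
    (V := (hY.eigenvectorUnitary : Matrix ι ι 𝕜)) B 1).symm

lemma re_trace_mul_eq_sum (hY : Y.IsHermitian) (B : Matrix ι ι 𝕜) :
    RCLike.re (Y * B).trace = ∑ i, hY.eigenvalues i * eigenbasisDiag hY B i := by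
  conv_lhs => rw [trace_mul_comm, hY.spectral_theorem, Unitary.conjStarAlgAut_apply]
  rw [trace_mul_unitary_conj_diagonal]
  simp [eigenbasisDiag, mul_comm]

noncomputable def spectralProj (hY : Y.IsHermitian) (J : Finset ι) : Matrix ι ι 𝕜 :=
  (hY.eigenvectorUnitary : Matrix ι ι 𝕜) * diagonal (fun i => if i ∈ J then 1 else 0) *
    star (hY.eigenvectorUnitary : Matrix ι ι 𝕜)

lemma posSemidef_spectralProj (hY : Y.IsHermitian) (J : Finset ι) :
    (spectralProj hY J).PosSemidef := by
  have hdiag : (diagonal (fun i => if i ∈ J then (1 : 𝕜) else 0)).PosSemidef :=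
    posSemidef_diagonal_iff.mpr fun i => by split <;> simp
  simpa [spectralProj, ← star_eq_conjTranspose] using
    hdiag.mul_mul_conjTranspose_same (hY.eigenvectorUnitary : Matrix ι ι 𝕜)

lemma one_sub_spectralProj (hY : Y.IsHermitian) (J : Finset ι) :
    1 - spectralProj hY J = spectralProj hY Jᶜ := by
  have h : (fun i => (if i ∈ J then (1 : 𝕜) else 0) + if i ∈ Jᶜ then 1 else 0) = fun _ => 1 := by
    ext i; by_cases i ∈ J <;> simp [*]
  rw [sub_eq_iff_eq_add', spectralProj, spectralProj, ← add_mul, ← mul_add, diagonal_add, h,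
    diagonal_one, mul_one, ← Unitary.coe_star, Unitary.coe_mul_star_self]

lemma re_trace_mul_spectralProj (hY : Y.IsHermitian) (B : Matrix ι ι 𝕜) (J : Finset ι) :
    RCLike.re (B * spectralProj hY J).trace = ∑ i ∈ J, eigenbasisDiag hY B i := by
  rw [spectralProj, trace_mul_unitary_conj_diagonal]
  simp [eigenbasisDiag, Finset.sum_ite_mem]

lemma re_trace_spectralProj (hY : Y.IsHermitian) (J : Finset ι) :
    RCLike.re (spectralProj hY J).trace = #J := by
  simpa [eigenbasisDiag_one] using re_trace_mul_spectralProj hY 1 J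

lemma _root_.Matrix.PosSemidef.sqrt_mul_self {A : Matrix ι ι 𝕜} (hA : A.PosSemidef) :
    hA.sqrt * hA.sqrt = A := by
  have hdiag : diagonal (((↑) ∘ (√·) ∘ hA.1.eigenvalues) : ι → 𝕜) *
      diagonal ((↑) ∘ (√·) ∘ hA.1.eigenvalues) = diagonal (RCLike.ofReal ∘ hA.1.eigenvalues) := by
    rw [diagonal_mul_diagonal]
    congr 1
    funext i
    simp [← RCLike.ofReal_mul, Real.mul_self_sqrt (hA.eigenvalues_nonneg i)]
  conv_rhs => rw [hA.1.spectral_theorem, Unitary.conjStarAlgAut_apply]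
  rw [PosSemidef.sqrt]
  simp only [mul_assoc]
  rw [← mul_assoc (star _ : Matrix ι ι 𝕜), Unitary.coe_star_mul_self, one_mul,
    ← mul_assoc (diagonal _), hdiag]

open Polynomial in
lemma map_eigenvalues_pow {A : Matrix ι ι 𝕜} (hA : A.IsHermitian) (p : ℕ)
    (hAp : (A ^ p).IsHermitian) :
    univ.val.map hAp.eigenvalues = univ.val.map (hA.eigenvalues ^ p) := by
  have hroots (f : ι → ℝ) : (∏ i, (X - C (f i : 𝕜))).roots = univ.val.map (RCLike.ofReal ∘ f) := by
    rw [roots_prod _ _ (prod_ne_zero_iff.mpr fun i _ => X_sub_C_ne_zero _)]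
    simp
  have h : (A ^ p).charpoly = ∏ i, (X - C ((hA.eigenvalues ^ p) i : 𝕜)) := by
    conv_lhs => rw [hA.spectral_theorem, ← map_pow, Unitary.conjStarAlgAut_apply,
      charpoly_mul_comm, ← mul_assoc]
    simp [charpoly_diagonal, diagonal_pow]
  rw [hAp.charpoly_eq] at h
  have := congrArg roots h
  rw [hroots, hroots, ← Multiset.map_map, ← Multiset.map_map RCLike.ofReal] at this
  exact Multiset.map_injective RCLike.ofReal_injective this

end Eigenbasis

section TraceInequalities

variable {𝕜 : Type*} [RCLike 𝕜]

/-- Ky Fan's maximum principle. -/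
lemma re_trace_mul_le_topSum {A W : Matrix (Fin n) (Fin n) 𝕜} (hA : A.PosSemidef)
    (hW : W.PosSemidef) (hW1 : (1 - W).PosSemidef) {k : ℕ} (hk : k ≤ n)
    (htr : RCLike.re W.trace ≤ k) : RCLike.re (A * W).trace ≤ topSum hA.1.eigenvalues k := by
  rw [re_trace_mul_eq_sum hA.1]
  refine sum_mul_le_topSum hA.eigenvalues_nonneg (eigenbasisDiag_nonneg hA.1 hW) (fun i => ?_) hk
    (by rwa [sum_eigenbasisDiag])
  have := eigenbasisDiag_nonneg hA.1 hW1 i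
  rw [eigenbasisDiag_sub, eigenbasisDiag_one] at this
  simpa using this

lemma re_trace_mul_spectralProj_le_topSum {A Y : Matrix (Fin n) (Fin n) 𝕜} (hA : A.PosSemidef)
    (hY : Y.IsHermitian) (J : Finset (Fin n)) :
    RCLike.re (A * spectralProj hY J).trace ≤ topSum hA.1.eigenvalues #J :=
  re_trace_mul_le_topSum hA (posSemidef_spectralProj hY J)
    (one_sub_spectralProj hY J ▸ posSemidef_spectralProj hY Jᶜ)
    ((card_le_univ J).trans_eq (Fintype.card_fin n))
    (re_trace_spectralProj hY J).le

theorem re_trace_mul_le_topSum_sq {C D Q : Matrix (Fin n) (Fin n) 𝕜} (hC : C.PosSemidef)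
    (hD : D.PosSemidef) (hmaj : WeakMaj hD.1.eigenvalues hC.1.eigenvalues) (hQ : Q.PosSemidef)
    (hCQ : (C - Q).PosSemidef) {k : ℕ} (hk : k ≤ n)
    (htr : RCLike.re Q.trace ≤ topSum hC.1.eigenvalues k) :
    RCLike.re (D * Q).trace ≤ topSum (hC.1.eigenvalues ^ 2) k := by
  rw [re_trace_mul_eq_sum hD.1]
  refine sum_mul_le_topSum_sq hD.eigenvalues_nonneg hC.eigenvalues_nonneg hmaj hk fun J => ?_
  have hle_C : ∑ i ∈ J, eigenbasisDiag hD.1 Q i ≤ topSum hC.1.eigenvalues #J :=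
    calc ∑ i ∈ J, eigenbasisDiag hD.1 Q i ≤ ∑ i ∈ J, eigenbasisDiag hD.1 C i :=
          sum_le_sum fun i _ => by
            linarith [eigenbasisDiag_sub hD.1 C Q i, eigenbasisDiag_nonneg hD.1 hCQ i]
      _ = RCLike.re (C * spectralProj hD.1 J).trace := (re_trace_mul_spectralProj _ _ _).symm
      _ ≤ _ := re_trace_mul_spectralProj_le_topSum hC hD.1 J
  have hle_tr : ∑ i ∈ J, eigenbasisDiag hD.1 Q i ≤ topSum hC.1.eigenvalues k := by
    refine (sum_le_sum_of_subset_of_nonneg (subset_univ J) fun i _ _ => ?_).trans ?_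
    · exact eigenbasisDiag_nonneg hD.1 hQ i
    · rwa [sum_eigenbasisDiag]
  rcases le_total #J k with h | h
  · rwa [min_eq_left h]
  · rwa [min_eq_right h]

end TraceInequalities

theorem sum_eigenvalues_sqrt_mul_mul_sqrt_le {C D : Matrix (Fin n) (Fin n) ℂ}
    (hC : C.PosSemidef) (hD : D.PosSemidef) (hmaj : WeakMaj hD.1.eigenvalues hC.1.eigenvalues)
    (hX : (hC.sqrt * D * hC.sqrt).IsHermitian) (s : Finset (Fin n)) :
    ∑ i ∈ s, hX.eigenvalues i ≤ topSum (hC.1.eigenvalues ^ 2) #s := by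
  have hR : hC.sqrt.IsHermitian := hC.posSemidef_sqrt.isHermitian
  set P := spectralProj hX s
  set Q := hC.sqrt * P * hC.sqrt
  have hsum : ∑ i ∈ s, hX.eigenvalues i = RCLike.re (D * Q).trace := by
    have hcycle : (hC.sqrt * D * hC.sqrt * P).trace = (D * Q).trace := by
      rw [show hC.sqrt * D * hC.sqrt * P = hC.sqrt * (D * hC.sqrt * P) by simp only [mul_assoc],
        trace_mul_comm]
      simp only [Q, mul_assoc]
    rw [← hcycle, re_trace_mul_spectralProj]
    exact sum_congr rfl fun i _ => (eigenbasisDiag_self hX i).symm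
  have hCQ : C - Q = hC.sqrt * spectralProj hX sᶜ * hC.sqrt := by
    rw [← one_sub_spectralProj, mul_sub, sub_mul, mul_one, hC.sqrt_mul_self]
  have htr : RCLike.re Q.trace ≤ topSum hC.1.eigenvalues #s := by
    rw [trace_mul_cycle, hC.sqrt_mul_self]
    exact re_trace_mul_spectralProj_le_topSum hC hX s
  rw [hsum]
  refine re_trace_mul_le_topSum_sq hC hD hmaj
    (sandwich_posSemidef hR (posSemidef_spectralProj hX s)) ?_
    ((card_le_univ s).trans_eq (Fintype.card_fin n)) htr
  rw [hCQ]
  exact sandwich_posSemidef hR (posSemidef_spectralProj hX sᶜ)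

/-- the quadratic lifting lemma for weak majorization:
`λ(D) ≺_w λ(C)` implies `λ(C^{1/2} D C^{1/2}) ≺_w λ(C²)`. -/
theorem quadratic_lifting {n : ℕ} (C D : Matrix (Fin n) (Fin n) ℂ)
    (hC : C.PosDef) (hD : D.PosDef)
    (hmaj : WeakMaj hD.isHermitian.eigenvalues hC.isHermitian.eigenvalues)
    (h1 : (hC.posSemidef.sqrt * D * hC.posSemidef.sqrt).IsHermitian)
    (h2 : (C ^ 2).IsHermitian) :
    WeakMaj h1.eigenvalues h2.eigenvalues := by
  intro s
  obtain ⟨t, ht, hsum⟩ := exists_card_eq_sum_eq_topSum h2.eigenvalues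
    ((card_le_univ s).trans_eq (Fintype.card_fin n))
  refine ⟨t, ht, ?_⟩
  calc ∑ i ∈ s, h1.eigenvalues i ≤ topSum (hC.isHermitian.eigenvalues ^ 2) #s :=
        sum_eigenvalues_sqrt_mul_mul_sqrt_le hC.posSemidef hD.posSemidef hmaj h1 s
    _ = ∑ i ∈ t, h2.eigenvalues i := by
        rw [topSum_congr (map_eigenvalues_pow hC.isHermitian 2 h2).symm, hsum]

end Heron
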